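/- arXiv:1611.05394 — 3 statements merged into one kernel-verified Lean document; each statement's English description precedes it below -/
import Mathlib

section
/- For smooth real functions U, 𝒲 on ℝ and real parameter α, define the first-order differential operators on smooth functions: 𝒬_α f = (1/√2)(U^α (U^{1−α} f)' + 𝒲 f) and 𝒬_α† f = (1/√2)(−U^{1−α}(U^α f)' + 𝒲 f), where U > 0. Then the commutator satisfies [𝒬_α, 𝒬_α†] f = (U 𝒲' + ((1−2α)/2) U U'') f, i.e. the commutator acts as multiplication by the function U(x)𝒲'(x) + ((1−2α)/2)U(x)U''(x). -/
/-- Lowering operator `𝒬_α f = (1/√2)(U^α (U^{1-α} f)' + 𝒲 f)`. -/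
noncomputable def Qlow (U W : ℝ → ℝ) (α : ℝ) (f : ℝ → ℝ) : ℝ → ℝ :=
  fun x => (Real.sqrt 2)⁻¹ *
    (U x ^ α * deriv (fun y => U y ^ (1 - α) * f y) x + W x * f x)

/-- Raising operator `𝒬_α† f = (1/√2)(-U^{1-α} (U^α f)' + 𝒲 f)`. -/
noncomputable def Qraise (U W : ℝ → ℝ) (α : ℝ) (f : ℝ → ℝ) : ℝ → ℝ :=
  fun x => (Real.sqrt 2)⁻¹ *
    (-(U x ^ (1 - α) * deriv (fun y => U y ^ α * f y) x) + W x * f x)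

lemma deriv_rpow_mul (U f : ℝ → ℝ) (β : ℝ) (hU : Differentiable ℝ U)
    (hUpos : ∀ x, 0 < U x) (x : ℝ) (hf : DifferentiableAt ℝ f x) :
    deriv (fun y => U y ^ β * f y) x =
      β * U x ^ (β - 1) * deriv U x * f x + U x ^ β * deriv f x := by
  have h1 : HasDerivAt (fun y => U y ^ β) (deriv U x * β * U x ^ (β - 1)) x :=
    (hU x).hasDerivAt.rpow_const (Or.inl (hUpos x).ne')
  rw [show (fun y => U y ^ β * f y) = (fun y => U y ^ β) * f from rfl, (h1.mul hf.hasDerivAt).deriv]; ring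

lemma Qlow_eq (U W : ℝ → ℝ) (α : ℝ) (hU : Differentiable ℝ U)
    (hUpos : ∀ x, 0 < U x) (f : ℝ → ℝ) (x : ℝ) (hf : DifferentiableAt ℝ f x) :
    Qlow U W α f x = (Real.sqrt 2)⁻¹ *
      ((1 - α) * deriv U x * f x + U x * deriv f x + W x * f x) := by
  have h1 : U x ^ α * U x ^ (1 - α - 1) = 1 := by
    rw [← Real.rpow_add (hUpos x)]; norm_num
  have h2 : U x ^ α * U x ^ (1 - α) = U x := by
    rw [← Real.rpow_add (hUpos x)]; norm_num
  unfold Qlow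
  rw [deriv_rpow_mul U f (1 - α) hU hUpos x hf]
  congr 1
  linear_combination ((1 - α) * deriv U x * f x) * h1 + deriv f x * h2

lemma Qraise_eq (U W : ℝ → ℝ) (α : ℝ) (hU : Differentiable ℝ U)
    (hUpos : ∀ x, 0 < U x) (f : ℝ → ℝ) (x : ℝ) (hf : DifferentiableAt ℝ f x) :
    Qraise U W α f x = (Real.sqrt 2)⁻¹ *
      (-(α * (deriv U x * f x)) - U x * deriv f x + W x * f x) := by
  have h1 : U x ^ (1 - α) * U x ^ (α - 1) = 1 := by
    rw [← Real.rpow_add (hUpos x)]; norm_num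
  have h2 : U x ^ (1 - α) * U x ^ α = U x := by
    rw [← Real.rpow_add (hUpos x)]; norm_num
  unfold Qraise
  rw [deriv_rpow_mul U f α hU hUpos x hf]
  congr 1
  linear_combination (-(α * (deriv U x * f x))) * h1 + (-(deriv f x)) * h2

/-- The commutator `[𝒬_α, 𝒬_α†]` acts as multiplication by
`U 𝒲' + ((1-2α)/2) U U''`. -/
theorem stmt5 (U W : ℝ → ℝ) (α : ℝ)
    (hU : ContDiff ℝ (⊤ : ℕ∞) U) (hUpos : ∀ x, 0 < U x) (hW : ContDiff ℝ (⊤ : ℕ∞) W)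
    (f : ℝ → ℝ) (hf : ContDiff ℝ (⊤ : ℕ∞) f) (x : ℝ) :
    Qlow U W α (Qraise U W α f) x - Qraise U W α (Qlow U W α f) x =
      (U x * deriv W x + (1 - 2 * α) / 2 * U x * deriv (deriv U) x) * f x := by
  set c : ℝ := (Real.sqrt 2)⁻¹ with hc_def
  have hc : c * c = 1 / 2 := by
    rw [hc_def, ← mul_inv, Real.mul_self_sqrt (by norm_num : (2:ℝ) ≥ 0)]
    norm_num
  have hUd : Differentiable ℝ U := hU.differentiable (by simp)
  have hU' : Differentiable ℝ (deriv U) := (contDiff_infty_iff_deriv.mp (hU.of_le (by simp))).2.differentiable (by norm_num)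
  have hU'd : Differentiable ℝ (deriv U) := hU'
  have hWd : Differentiable ℝ W := hW.differentiable (by simp)
  have hfd : Differentiable ℝ f := hf.differentiable (by simp)
  have hf' : Differentiable ℝ (deriv f) := (contDiff_infty_iff_deriv.mp (hf.of_le (by simp))).2.differentiable (by norm_num)
  have hf'd : Differentiable ℝ (deriv f) := hf'
  -- simplified forms of the operators applied to f
  have hR : Qraise U W α f = fun y =>
      c * (-(α * (deriv U y * f y)) - U y * deriv f y + W y * f y) := by
    funext y; exact Qraise_eq U W α hUd hUpos f y (hfd y)
  have hL : Qlow U W α f = fun y =>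
      c * ((1 - α) * deriv U y * f y + U y * deriv f y + W y * f y) := by
    funext y; exact Qlow_eq U W α hUd hUpos f y (hfd y)
  -- derivatives of the simplified forms
  have hRder : HasDerivAt (fun y =>
      c * (-(α * (deriv U y * f y)) - U y * deriv f y + W y * f y))
      (c * (-(α * (deriv (deriv U) x * f x + deriv U x * deriv f x))
        - (deriv U x * deriv f x + U x * deriv (deriv f) x)
        + (deriv W x * f x + W x * deriv f x))) x := by
    exact ((((((hU'd x).hasDerivAt.mul (hfd x).hasDerivAt).const_mul α).neg).sub
      ((hUd x).hasDerivAt.mul (hf'd x).hasDerivAt)).add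
      ((hWd x).hasDerivAt.mul (hfd x).hasDerivAt)).const_mul c
  have hLder : HasDerivAt (fun y =>
      c * ((1 - α) * deriv U y * f y + U y * deriv f y + W y * f y))
      (c * (((1 - α) * deriv (deriv U) x) * f x + ((1 - α) * deriv U x) * deriv f x
        + (deriv U x * deriv f x + U x * deriv (deriv f) x)
        + (deriv W x * f x + W x * deriv f x))) x := by
    exact (((((hU'd x).hasDerivAt.const_mul (1 - α)).mul (hfd x).hasDerivAt).add
      ((hUd x).hasDerivAt.mul (hf'd x).hasDerivAt)).add
      ((hWd x).hasDerivAt.mul (hfd x).hasDerivAt)).const_mul c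
  have hRdiff : DifferentiableAt ℝ (Qraise U W α f) x := by
    rw [hR]; exact hRder.differentiableAt
  have hLdiff : DifferentiableAt ℝ (Qlow U W α f) x := by
    rw [hL]; exact hLder.differentiableAt
  rw [Qlow_eq U W α hUd hUpos (Qraise U W α f) x hRdiff,
      Qraise_eq U W α hUd hUpos (Qlow U W α f) x hLdiff]
  rw [hR, hL] at *
  rw [hRder.deriv, hLder.deriv]
  simp only []
  linear_combination (2 * (U x * deriv W x + (1 - 2 * α) / 2 * U x * deriv (deriv U) x) * f x) * hc
end

section
/- For smooth positive U and smooth 𝒲_α, the operator ℋ_α = 𝒬_α†𝒬_α + ε acting on smooth f satisfies ℋ_α f = −(1/2) d/dx (U² df/dx) + (𝒱_α + 𝒱_U^{(α)}) f, where 𝒱_α − ε = (1/2)𝒲_α² − (1/2)U𝒲_α' + ((1−2α)/2)U'𝒲_α and 𝒱_U^{(α)} = (α(α−1)/2)U'² + ((α−1)/2)U''U. -/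
/-- `ℋ_α f = -(1/2)(U² f')' + (𝒱_α + 𝒱_U^{(α)}) f` with the stated
effective potential. -/
theorem stmt7 (U W : ℝ → ℝ) (α ε : ℝ)
    (hU : ContDiff ℝ (⊤ : ℕ∞) U) (hUpos : ∀ x, 0 < U x) (hW : ContDiff ℝ (⊤ : ℕ∞) W)
    (f : ℝ → ℝ) (hf : ContDiff ℝ (⊤ : ℕ∞) f) (x : ℝ) :
    Qraise U W α (Qlow U W α f) x + ε * f x =
      -(1 / 2) * deriv (fun y => U y ^ (2 : ℕ) * deriv f y) x +
        ((1 / 2 * W x ^ 2 - 1 / 2 * U x * deriv W x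
            + (1 - 2 * α) / 2 * deriv U x * W x + ε)
          + (α * (α - 1) / 2 * deriv U x ^ 2
            + (α - 1) / 2 * deriv (deriv U) x * U x)) * f x := by
  have hUd : Differentiable ℝ U := hU.differentiable (by simp)
  have hU' := (contDiff_infty_iff_deriv.mp (hU.of_le (by simp))).2
  have hU'd : Differentiable ℝ (deriv U) := hU'.differentiable (by simp)
  have hfd : Differentiable ℝ f := hf.differentiable (by simp)
  have hf' := (contDiff_infty_iff_deriv.mp (hf.of_le (by simp))).2
  have hf'd : Differentiable ℝ (deriv f) := hf'.differentiable (by simp)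
  have hWd : Differentiable ℝ W := hW.differentiable (by simp)
  -- Step 1: simplify Qlow
  have hQ : Qlow U W α f = fun y => (Real.sqrt 2)⁻¹ *
      ((1 - α) * deriv U y * f y + U y * deriv f y + W y * f y) := by
    funext y
    have h1 := ((hUd y).hasDerivAt.rpow_const
        (p := 1 - α) (Or.inl (hUpos y).ne')).mul (hfd y).hasDerivAt
    unfold Qlow
    rw [HasDerivAt.deriv (f := fun y => U y ^ (1 - α) * f y) h1]
    have e1 : U y ^ α * U y ^ (1 - α - 1) = 1 := by
      rw [← Real.rpow_add (hUpos y)]; norm_num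
    have e2 : U y ^ α * U y ^ (1 - α) = U y := by
      rw [← Real.rpow_add (hUpos y)]; norm_num [Real.rpow_one]
    linear_combination (Real.sqrt 2)⁻¹ * ((1 - α) * deriv U y * f y * e1
      + deriv f y * e2)
  -- derivative of the simplified Qlow
  have hA : HasDerivAt (fun y => (1 - α) * deriv U y * f y)
      ((1 - α) * deriv (deriv U) x * f x + (1 - α) * deriv U x * deriv f x) x :=
    (((hU'd x).hasDerivAt.const_mul (1 - α)).mul (hfd x).hasDerivAt)
  have hB : HasDerivAt (fun y => U y * deriv f y)
      (deriv U x * deriv f x + U x * deriv (deriv f) x) x :=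
    (hUd x).hasDerivAt.mul (hf'd x).hasDerivAt
  have hC : HasDerivAt (fun y => W y * f y)
      (deriv W x * f x + W x * deriv f x) x :=
    (hWd x).hasDerivAt.mul (hfd x).hasDerivAt
  have hI := ((hA.add hB).add hC).const_mul (Real.sqrt 2)⁻¹
  have hP : HasDerivAt (fun y => U y ^ α)
      (deriv U x * α * U x ^ (α - 1)) x :=
    (hUd x).hasDerivAt.rpow_const (Or.inl (hUpos x).ne')
  have hD := hP.mul hI
  have hR := ((hUd x).hasDerivAt.pow 2).mul (hf'd x).hasDerivAt
  have e1 : U x ^ (1 - α) * U x ^ (α - 1) = 1 := by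
    rw [← Real.rpow_add (hUpos x)]; norm_num
  have e2 : U x ^ (1 - α) * U x ^ α = U x := by
    rw [← Real.rpow_add (hUpos x)]; norm_num [Real.rpow_one]
  have hs : (Real.sqrt 2)⁻¹ * (Real.sqrt 2)⁻¹ = 1 / 2 := by
    rw [← mul_inv, Real.mul_self_sqrt (by norm_num : (0:ℝ) ≤ 2)]; norm_num
  simp only [Qraise, hQ]
  rw [HasDerivAt.deriv (f := fun y => U y ^ α * ((Real.sqrt 2)⁻¹ * ((1 - α) * deriv U y * f y + U y * deriv f y + W y * f y))) hD,
    HasDerivAt.deriv (f := fun y => U y ^ (2 : ℕ) * deriv f y) hR]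
  simp only [Pi.add_apply, Pi.mul_apply, Pi.pow_apply, Nat.cast_ofNat]
  set s := (Real.sqrt 2)⁻¹ with hsdef
  set u := U x
  set u' := deriv U x
  set u'' := deriv (deriv U) x
  set f0 := f x
  set f1 := deriv f x
  set f2 := deriv (deriv f) x
  set w := W x
  set w' := deriv W x
  set H := (1 - α) * u' * f0 + u * f1 + w * f0 with hH
  set H' := ((1 - α) * u'' * f0 + (1 - α) * u' * f1) + (u' * f1 + u * f2)
      + (w' * f0 + w * f1) with hH'
  linear_combination (-(s * s) * α * u' * H) * e1 + (-(s * s) * H') * e2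
    + (-α * u' * H - u * H' + w * H) * hs
end

section
/- Let U, 𝒲_α, 𝒲_{1−α} be smooth with U > 0, and define T_α(x) = U(x)^{1−α} exp{∫^{μ(x)} (𝒲_α − 𝒲_{1−α})/2 dμ} where μ' = 1/U, and ∇_x^{(α)} f = (1/√2)(f' + (𝒲_α + 𝒲_{1−α})/(2U) f). Then the operator Ẑ f = T_α · ∇_x^{(α)}(T_α f) satisfies the intertwining relation Ẑ ∘ 𝒬_α = 𝒬_{1−α} ∘ Ẑ on smooth functions, where 𝒬_α f = (1/√2)(U^α(U^{1−α}f)' + 𝒲_α f), provided 𝒲_α and 𝒲_{1−α} satisfy the compatibility condition making both ℋ_α and ℋ_{1−α} share the same effective potential. -/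
open scoped ContDiff

set_option maxHeartbeats 1000000 in
/-- `Ẑ = T_α ∇_x^{(α)} T_α` intertwines `𝒬_α` and `𝒬_{1-α}` provided the
effective potentials built from `(α, 𝒲_α)` and `(1-α, 𝒲_{1-α})` coincide. -/
theorem stmt11 (U Wa Wb G : ℝ → ℝ) (α : ℝ)
    (hU : ContDiff ℝ (⊤ : ℕ∞) U) (hUpos : ∀ x, 0 < U x)
    (hWa : ContDiff ℝ (⊤ : ℕ∞) Wa) (hWb : ContDiff ℝ (⊤ : ℕ∞) Wb)
    (hG : ∀ x, HasDerivAt G ((Wa x - Wb x) / (2 * U x)) x)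
    (T : ℝ → ℝ) (hT : T = fun x => U x ^ (1 - α) * Real.exp (G x))
    (Z : (ℝ → ℝ) → ℝ → ℝ)
    (hZ : Z = fun f x => T x * ((Real.sqrt 2)⁻¹ *
      (deriv (fun y => T y * f y) x
        + (Wa x + Wb x) / (2 * U x) * (T x * f x))))
    (hcompat : ∀ x,
      1 / 2 * Wa x ^ 2 - 1 / 2 * U x * deriv Wa x
          + (1 - 2 * α) / 2 * deriv U x * Wa x
          + α * (α - 1) / 2 * deriv U x ^ 2
          + (α - 1) / 2 * deriv (deriv U) x * U x
        = 1 / 2 * Wb x ^ 2 - 1 / 2 * U x * deriv Wb x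
          + (1 - 2 * (1 - α)) / 2 * deriv U x * Wb x
          + (1 - α) * ((1 - α) - 1) / 2 * deriv U x ^ 2
          + ((1 - α) - 1) / 2 * deriv (deriv U) x * U x)
    (f : ℝ → ℝ) (hf : ContDiff ℝ (⊤ : ℕ∞) f) (x : ℝ) :
    Z (Qlow U Wa α f) x = Qlow U Wb (1 - α) (Z f) x := by
  subst hT hZ
  have hUne : ∀ y, U y ≠ 0 := fun y => (hUpos y).ne'
  have hs2 : Real.sqrt 2 ≠ 0 := by positivity
  have hU1 : ContDiff ℝ ∞ (deriv U) :=
    (contDiff_infty_iff_deriv.mp (hU.of_le (by simp))).2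
  have hf1 : ContDiff ℝ ∞ (deriv f) :=
    (contDiff_infty_iff_deriv.mp (hf.of_le (by simp))).2
  have hUd : ∀ y, HasDerivAt U (deriv U y) y := fun y =>
    (hU.differentiable (by simp) y).hasDerivAt
  have hU'd : ∀ y, HasDerivAt (deriv U) (deriv (deriv U) y) y := fun y =>
    (hU1.differentiable (by simp) y).hasDerivAt
  have hfd : ∀ y, HasDerivAt f (deriv f y) y := fun y =>
    (hf.differentiable (by simp) y).hasDerivAt
  have hf'd : ∀ y, HasDerivAt (deriv f) (deriv (deriv f) y) y := fun y =>
    (hf1.differentiable (by simp) y).hasDerivAt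
  have hWad : ∀ y, HasDerivAt Wa (deriv Wa y) y := fun y =>
    (hWa.differentiable (by simp) y).hasDerivAt
  have hBd : ∀ y, HasDerivAt (fun z => U z ^ (1 - α))
      (deriv U y * (1 - α) * U y ^ (1 - α - 1)) y := fun y =>
    (hUd y).rpow_const (Or.inl (hUne y))
  have hEd : ∀ y, HasDerivAt (fun z => Real.exp (G z))
      (Real.exp (G y) * ((Wa y - Wb y) / (2 * U y))) y := fun y => (hG y).exp
  have hTd : ∀ y, HasDerivAt (fun z => U z ^ (1 - α) * Real.exp (G z))
      (deriv U y * (1 - α) * U y ^ (1 - α - 1) * Real.exp (G y)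
        + U y ^ (1 - α) * (Real.exp (G y) * ((Wa y - Wb y) / (2 * U y)))) y :=
    fun y => (hBd y).mul (hEd y)
  -- rpow algebra
  have hBm : ∀ y, U y ^ (1 - α - 1) = U y ^ (1 - α) / U y := fun y => by
    rw [show (1 - α - 1 : ℝ) = (1 - α) - 1 by ring, Real.rpow_sub (hUpos y),
      Real.rpow_one]
  have hBne : ∀ y, U y ^ (1 - α) ≠ 0 := fun y =>
    (Real.rpow_pos_of_pos (hUpos y) _).ne'
  have hA : ∀ y, U y ^ α = U y / U y ^ (1 - α) := fun y => by
    rw [eq_div_iff (hBne y), ← Real.rpow_add (hUpos y)]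
    norm_num
  have hAm : ∀ y, U y ^ (α - 1) = (U y ^ (1 - α))⁻¹ := fun y => by
    rw [show (α - 1 : ℝ) = -(1 - α) by ring, Real.rpow_neg (hUpos y).le]
  -- explicit formula for Qlow U Wa α f
  have hq : ∀ y, (Real.sqrt 2)⁻¹ *
      (U y ^ α * deriv (fun z => U z ^ (1 - α) * f z) y + Wa y * f y)
      = (Real.sqrt 2)⁻¹ *
        ((1 - α) * deriv U y * f y + U y * deriv f y + Wa y * f y) := by
    intro y
    rw [HasDerivAt.deriv (f := fun z => U z ^ (1 - α) * f z) ((hBd y).mul (hfd y)), hBm y, hA y]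
    have hby := hBne y
    have huy := hUne y
    generalize U y ^ (1 - α) = b at hby ⊢
    generalize U y = u at huy ⊢
    have h2 : Real.sqrt 2 ≠ 0 := hs2
    generalize Real.sqrt 2 = s at h2 ⊢
    field_simp
  -- explicit formula for Z f
  have hz : ∀ y, U y ^ (1 - α) * Real.exp (G y) * ((Real.sqrt 2)⁻¹ *
        (deriv (fun z => U z ^ (1 - α) * Real.exp (G z) * f z) y
          + (Wa y + Wb y) / (2 * U y) * (U y ^ (1 - α) * Real.exp (G y) * f y)))
      = (Real.sqrt 2)⁻¹ * ((U y ^ (1 - α) * Real.exp (G y)) ^ 2 *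
          (deriv f y + ((1 - α) * deriv U y + Wa y) / U y * f y)) := by
    intro y
    rw [HasDerivAt.deriv (f := fun z => U z ^ (1 - α) * Real.exp (G z) * f z) ((hTd y).mul (hfd y)), hBm y]
    have hby := hBne y
    have huy := hUne y
    generalize U y ^ (1 - α) = b at hby ⊢
    generalize U y = u at huy ⊢
    have h2 : Real.sqrt 2 ≠ 0 := hs2
    generalize Real.sqrt 2 = s at h2 ⊢
    field_simp
    ring
  simp only [Qlow]
  simp only [hq, hz]
  -- derivative of the explicit Qlow (with the T factor)
  have dL : deriv (fun y => U y ^ (1 - α) * Real.exp (G y) * ((Real.sqrt 2)⁻¹ *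
      ((1 - α) * deriv U y * f y + U y * deriv f y + Wa y * f y))) x
      = (deriv U x * (1 - α) * U x ^ (1 - α - 1) * Real.exp (G x)
          + U x ^ (1 - α) * (Real.exp (G x) * ((Wa x - Wb x) / (2 * U x)))) *
          ((Real.sqrt 2)⁻¹ *
            ((1 - α) * deriv U x * f x + U x * deriv f x + Wa x * f x))
        + U x ^ (1 - α) * Real.exp (G x) * ((Real.sqrt 2)⁻¹ *
            (((1 - α) * deriv (deriv U) x * f x + (1 - α) * deriv U x * deriv f x)
              + (deriv U x * deriv f x + U x * deriv (deriv f) x)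
              + (deriv Wa x * f x + Wa x * deriv f x))) :=
    ((hTd x).mul (((((((hU'd x).const_mul (1 - α)).mul (hfd x)).add
      ((hUd x).mul (hf'd x))).add ((hWad x).mul (hfd x))).const_mul _))).deriv
  -- derivative of U^(1-(1-α)) times the explicit Z f
  have dR : deriv (fun y => U y ^ (1 - (1 - α)) * ((Real.sqrt 2)⁻¹ *
      ((U y ^ (1 - α) * Real.exp (G y)) ^ 2 *
        (deriv f y + ((1 - α) * deriv U y + Wa y) / U y * f y)))) x
      = deriv U x * (1 - (1 - α)) * U x ^ (1 - (1 - α) - 1) *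
          ((Real.sqrt 2)⁻¹ * ((U x ^ (1 - α) * Real.exp (G x)) ^ 2 *
            (deriv f x + ((1 - α) * deriv U x + Wa x) / U x * f x)))
        + U x ^ (1 - (1 - α)) * ((Real.sqrt 2)⁻¹ *
          (((2 : ℕ) * (U x ^ (1 - α) * Real.exp (G x)) ^ (2 - 1) *
              (deriv U x * (1 - α) * U x ^ (1 - α - 1) * Real.exp (G x)
                + U x ^ (1 - α) * (Real.exp (G x) * ((Wa x - Wb x) / (2 * U x)))))
            * (deriv f x + ((1 - α) * deriv U x + Wa x) / U x * f x)
          + (U x ^ (1 - α) * Real.exp (G x)) ^ 2 *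
            (deriv (deriv f) x +
              ((((1 - α) * deriv (deriv U) x + deriv Wa x) * U x
                - ((1 - α) * deriv U x + Wa x) * deriv U x) / U x ^ 2 * f x
              + ((1 - α) * deriv U x + Wa x) / U x * deriv f x)))) :=
    (((hUd x).rpow_const (Or.inl (hUne x))).mul
      ((((hTd x).pow 2).mul ((hf'd x).add
        (((((hU'd x).const_mul (1 - α)).add (hWad x)).div (hUd x) (hUne x)).mul
          (hfd x)))).const_mul _)).deriv
  rw [dL, dR]
  have e1 : U x ^ (1 - (1 - α)) = U x ^ α := by
    rw [show (1 - (1 - α) : ℝ) = α by ring]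
  have e2 : U x ^ (1 - (1 - α) - 1) = U x ^ (α - 1) := by
    rw [show (1 - (1 - α) - 1 : ℝ) = α - 1 by ring]
  rw [e1, e2, hA x, hAm x, hBm x]
  have hsq : ((Real.sqrt 2)⁻¹ : ℝ) ≠ 0 := by positivity
  have hbx := hBne x
  have hux := hUne x
  generalize U x ^ (1 - α) = b at hbx ⊢
  generalize U x = u at hux ⊢
  have h2 : Real.sqrt 2 ≠ 0 := hs2
  generalize Real.sqrt 2 = s at h2 ⊢
  field_simp
  ring
end
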